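/- (Thermodynamic limit of the finite-size factor.) For each N ≥ 1, define ξ_T(N) = [ ∏_{θ∈θ_p(N)} ∏_{θ'∈θ_a(N)} sinh²((γ_θ+γ_{θ'})/2) / ( ∏_{θ,θ'∈θ_p(N)} sinh((γ_θ+γ_{θ'})/2) · ∏_{θ,θ'∈θ_a(N)} sinh((γ_θ+γ_{θ'})/2) ) ]^{1/4}. Then, for fixed couplings in the ferromagnetic regime, ξ_T(N) → 1 as N → ∞. -/

import Mathlib

/-!
In the ferromagnetic regime `cosh γ ≥ cosh (2K*_x - 2K_y) > 1`, so `γ = arcosh (cosh γ)` is smooth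
and positive, and `F x y = log sinh ((γ x + γ y) / 2)` is smooth and `2π`-periodic in each variable.
With `h = π / N` the periodic momenta are the even and the antiperiodic ones the odd multiples of
`h`, and `4 log ξ_T(N) = -∑_{m,n < 2N} (-1)^(m+n) F (m h) (n h)`.
By periodicity, an alternating sum over `2N` equally spaced points is half the sum of the `N`
second differences starting at the even points. Doing this in both variables turns the double
alternating sum into a quarter of a sum of `N²` mixed fourth differences, each `O(h⁴)` by the mean
value theorem. Hence `log ξ_T(N) = O(1/N²)`.
-/

open Finset Filter

noncomputable section

/-- Antiperiodic momenta: θ_a(N) = {(2j−1)π/N : j = 1,…,N}. -/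
def thetaA (N : ℕ) (j : Fin N) : ℝ := (2 * (j : ℝ) + 1) * Real.pi / N

/-- Periodic momenta: θ_p(N) = {2(j−1)π/N : j = 1,…,N}. -/
def thetaP (N : ℕ) (j : Fin N) : ℝ := (2 * (j : ℝ)) * Real.pi / N

open Function Real Set

def secondDiff (g : ℝ → ℝ) (h x : ℝ) : ℝ := g x - 2 * g (x + h) + g (x + 2 * h)

lemma secondDiff_sum {ι : Type*} (s : Finset ι) (g : ι → ℝ → ℝ) (h x : ℝ) :
    secondDiff (fun x => ∑ i ∈ s, g i x) h x = ∑ i ∈ s, secondDiff (g i) h x := by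
  simp only [secondDiff, sum_add_distrib, sum_sub_distrib, mul_sum]

lemma secondDiff_const_mul (c : ℝ) (g : ℝ → ℝ) (h x : ℝ) :
    secondDiff (fun x => c * g x) h x = c * secondDiff g h x := by
  simp only [secondDiff]
  ring

lemma hasDerivAt_secondDiff {F F' : ℝ → ℝ → ℝ} (hF : ∀ x y, HasDerivAt (F · y) (F' x y) x)
    (h y x : ℝ) : HasDerivAt (fun x => secondDiff (F x) h y) (secondDiff (F' x) h y) x :=
  ((hF x y).sub ((hF x (y + h)).const_mul 2)).add (hF x (y + 2 * h))

lemma abs_secondDiff_le {g g' g'' : ℝ → ℝ} (hg : ∀ t, HasDerivAt g (g' t) t)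
    (hg' : ∀ t, HasDerivAt g' (g'' t) t) {x h M : ℝ} (hh : 0 ≤ h)
    (hM : ∀ t ∈ Icc x (x + 2 * h), |g'' t| ≤ M) :
    |secondDiff g h x| ≤ h ^ 2 * M := by
  have hg'_step : ∀ t ∈ Icc x (x + h), ‖g' (t + h) - g' t‖ ≤ M * h := by
    intro t ht
    simpa [abs_of_nonneg hh] using
      (convex_Icc t (t + h)).norm_image_sub_le_of_norm_hasDerivWithin_le
        (fun s _ => (hg' s).hasDerivWithinAt)
        (fun s hs => hM s ⟨by linarith [ht.1, hs.1], by linarith [ht.2, hs.2]⟩)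
        (left_mem_Icc.2 (by linarith)) (right_mem_Icc.2 (by linarith))
  have hstep := (convex_Icc x (x + h)).norm_image_sub_le_of_norm_hasDerivWithin_le
    (f := fun t => g (t + h) - g t)
    (fun t _ => (((hg (t + h)).comp_add_const t h).sub (hg t)).hasDerivWithinAt) hg'_step
    (left_mem_Icc.2 (by linarith)) (right_mem_Icc.2 (by linarith))
  simp only [Real.norm_eq_abs, add_sub_cancel_left, abs_of_nonneg hh] at hstep
  calc |secondDiff g h x| = |(g (x + h + h) - g (x + h)) - (g (x + h) - g x)| := by
        simp only [secondDiff]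
        ring_nf
    _ ≤ M * h * h := hstep
    _ = h ^ 2 * M := by ring

lemma two_mul_sum_sub_eq_sum_secondDiff (g : ℝ → ℝ) (N : ℕ) (h : ℝ)
    (hper : g (2 * N * h) = g 0) :
    2 * ∑ j ∈ range N, (g (2 * j * h) - g ((2 * j + 1) * h)) =
      ∑ j ∈ range N, secondDiff g h (2 * j * h) := by
  have hshift := sum_range_succ' (fun j : ℕ => g (2 * j * h)) N
  rw [sum_range_succ, Nat.cast_zero, mul_zero, zero_mul, hper] at hshift
  have hterm : ∀ j : ℕ, secondDiff g h (2 * j * h) =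
      g (2 * j * h) - 2 * g ((2 * j + 1) * h) + g (2 * ((j + 1 : ℕ) : ℝ) * h) := fun j => by
    simp only [secondDiff]
    push_cast
    ring_nf
  simp only [hterm, sum_add_distrib, sum_sub_distrib, mul_sub, ← mul_sum]
  linarith

def deriv₁ (F : ℝ → ℝ → ℝ) (x y : ℝ) : ℝ := deriv (F · y) x

def deriv₂ (F : ℝ → ℝ → ℝ) (x y : ℝ) : ℝ := deriv (F x) y

def mixedDiff (F : ℝ → ℝ → ℝ) (h x y : ℝ) : ℝ :=
  secondDiff (fun x' => secondDiff (F x') h y) h x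

def gridSum (F : ℝ → ℝ → ℝ) (N : ℕ) (h c d : ℝ) : ℝ :=
  ∑ j ∈ range N, ∑ k ∈ range N, F ((2 * j + c) * h) ((2 * k + d) * h)

/-- `∑_{m,n < 2N} (-1)^(m+n) F (m h) (n h)`, split according to the parities of `m` and `n`. -/
def alternatingGridSum (F : ℝ → ℝ → ℝ) (N : ℕ) (h : ℝ) : ℝ :=
  gridSum F N h 0 0 + gridSum F N h 1 1 - gridSum F N h 0 1 - gridSum F N h 1 0

section TwoVariables

variable {F : ℝ → ℝ → ℝ} {n : WithTop ℕ∞}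

lemma ContDiff.uncurry_flip (hF : ContDiff ℝ n (uncurry F)) : ContDiff ℝ n (uncurry (flip F)) :=
  hF.comp (contDiff_snd.prodMk contDiff_fst)

lemma ContDiff.uncurry_deriv₂ (hF : ContDiff ℝ (n + 1) (uncurry F)) :
    ContDiff ℝ n (uncurry (deriv₂ F)) :=
  (ContDiff.fderiv (f := fun p : ℝ × ℝ => F p.1) (hF.comp (contDiff_fst.fst.prodMk contDiff_snd))
    contDiff_snd le_rfl).clm_apply contDiff_const

lemma ContDiff.uncurry_deriv₁ (hF : ContDiff ℝ (n + 1) (uncurry F)) :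
    ContDiff ℝ n (uncurry (deriv₁ F)) :=
  hF.uncurry_flip.uncurry_deriv₂.uncurry_flip

lemma ContDiff.hasDerivAt_deriv₂ (hF : ContDiff ℝ 1 (uncurry F)) (x y : ℝ) :
    HasDerivAt (F x) (deriv₂ F x y) y :=
  ((hF.comp (contDiff_const.prodMk contDiff_id)).differentiable one_ne_zero y).hasDerivAt

lemma ContDiff.hasDerivAt_deriv₁ (hF : ContDiff ℝ 1 (uncurry F)) (x y : ℝ) :
    HasDerivAt (F · y) (deriv₁ F x y) x :=
  hF.uncurry_flip.hasDerivAt_deriv₂ y x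

lemma abs_mixedDiff_le (hF : ContDiff ℝ 4 (uncurry F)) {h x y M : ℝ} (hh : 0 ≤ h)
    (hM : ∀ s ∈ Icc x (x + 2 * h), ∀ t ∈ Icc y (y + 2 * h),
      |deriv₂ (deriv₂ (deriv₁ (deriv₁ F))) s t| ≤ M) :
    |mixedDiff F h x y| ≤ h ^ 4 * M := by
  have hF₁ : ContDiff ℝ 3 (uncurry (deriv₁ F)) := hF.uncurry_deriv₁
  have hF₁₁ : ContDiff ℝ 2 (uncurry (deriv₁ (deriv₁ F))) := hF₁.uncurry_deriv₁
  have hF₂₁₁ : ContDiff ℝ 1 (uncurry (deriv₂ (deriv₁ (deriv₁ F)))) := hF₁₁.uncurry_deriv₂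
  have hinner : ∀ s ∈ Icc x (x + 2 * h), |secondDiff (deriv₁ (deriv₁ F) s) h y| ≤ h ^ 2 * M :=
    fun s hs => abs_secondDiff_le ((hF₁₁.of_le (by norm_num)).hasDerivAt_deriv₂ s)
      (hF₂₁₁.hasDerivAt_deriv₂ s) hh (hM s hs)
  calc |mixedDiff F h x y| ≤ h ^ 2 * (h ^ 2 * M) :=
        abs_secondDiff_le (hasDerivAt_secondDiff ((hF.of_le (by norm_num)).hasDerivAt_deriv₁) h y)
          (hasDerivAt_secondDiff ((hF₁.of_le (by norm_num)).hasDerivAt_deriv₁) h y) hh hinner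
    _ = h ^ 4 * M := by ring

lemma gridSum_comm (hF : ∀ x y, F x y = F y x) (N : ℕ) (h c d : ℝ) :
    gridSum F N h c d = gridSum F N h d c := by
  rw [gridSum, sum_comm]
  simp only [gridSum, hF]

lemma four_mul_alternatingGridSum (N : ℕ) (h : ℝ)
    (hper₁ : ∀ x, F x (2 * N * h) = F x 0) (hper₂ : ∀ y, F (2 * N * h) y = F 0 y) :
    4 * alternatingGridSum F N h =
      ∑ r ∈ range N, ∑ s ∈ range N, mixedDiff F h (2 * r * h) (2 * s * h) := by
  set A : ℝ → ℝ := fun x => ∑ k ∈ range N, (F x (2 * k * h) - F x ((2 * k + 1) * h))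
  have hA : ∀ x, ∑ s ∈ range N, mixedDiff F h x (2 * s * h) = 2 * secondDiff A h x := fun x => by
    simp only [mixedDiff, ← secondDiff_sum, ← two_mul_sum_sub_eq_sum_secondDiff _ N h (hper₁ _),
      secondDiff_const_mul, A]
  have hAper : A (2 * N * h) = A 0 := by simp only [A, hper₂]
  simp only [hA, ← mul_sum, ← two_mul_sum_sub_eq_sum_secondDiff A N h hAper]
  simp only [A, alternatingGridSum, gridSum, sum_sub_distrib, add_zero]
  ring

lemma abs_alternatingGridSum_le (hF : ContDiff ℝ 4 (uncurry F))
    (hper₁ : ∀ x, Periodic (F x) (2 * π)) (hper₂ : ∀ y, Periodic (F · y) (2 * π))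
    {N : ℕ} (hN : 0 < N) {M : ℝ}
    (hM : ∀ s ∈ Icc 0 (2 * π), ∀ t ∈ Icc 0 (2 * π),
      |deriv₂ (deriv₂ (deriv₁ (deriv₁ F))) s t| ≤ M) :
    |alternatingGridSum F N (π / N)| ≤ π ^ 4 * M / (4 * N ^ 2) := by
  set h := π / N
  have hN' : (0 : ℝ) < N := Nat.cast_pos.2 hN
  have hh : 0 ≤ h := by positivity
  have hperiod : 2 * N * h = 0 + 2 * π := by
    simp only [h]
    field_simp
    ring
  have hbox : ∀ r ∈ range N, Icc (2 * r * h) (2 * r * h + 2 * h) ⊆ Icc 0 (2 * π) := by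
    intro r hr
    have hr' : (r : ℝ) + 1 ≤ N := by exact_mod_cast mem_range.1 hr
    refine Icc_subset_Icc (by positivity) ?_
    calc 2 * r * h + 2 * h = 2 * (r + 1) * h := by ring
      _ ≤ 2 * N * h := by gcongr
      _ = 2 * π := by rw [hperiod, zero_add]
  have hsum := four_mul_alternatingGridSum (F := F) N h (fun x => by rw [hperiod, hper₁])
    (fun y => by rw [hperiod]; exact hper₂ y 0)
  have hmixed : ∀ r ∈ range N, ∀ s ∈ range N,
      |mixedDiff F h (2 * r * h) (2 * s * h)| ≤ h ^ 4 * M := fun r hr s hs =>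
    abs_mixedDiff_le hF hh fun s' hs' t' ht' => hM s' (hbox r hr hs') t' (hbox s hs ht')
  have hfour : 4 * |alternatingGridSum F N h| ≤ N * (N * (h ^ 4 * M)) := by
    calc 4 * |alternatingGridSum F N h|
        = |∑ r ∈ range N, ∑ s ∈ range N, mixedDiff F h (2 * r * h) (2 * s * h)| := by
          rw [← hsum, abs_mul, abs_of_pos (four_pos : (0 : ℝ) < 4)]
      _ ≤ ∑ r ∈ range N, ∑ s ∈ range N, |mixedDiff F h (2 * r * h) (2 * s * h)| :=
          (abs_sum_le_sum_abs _ _).trans (sum_le_sum fun r _ => abs_sum_le_sum_abs _ _)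
      _ ≤ ∑ r ∈ range N, ∑ s ∈ range N, h ^ 4 * M :=
          sum_le_sum fun r hr => sum_le_sum fun s hs => hmixed r hr s hs
      _ = N * (N * (h ^ 4 * M)) := by simp
  rw [le_div_iff₀ (by positivity)]
  calc |alternatingGridSum F N h| * (4 * N ^ 2) = 4 * |alternatingGridSum F N h| * N ^ 2 := by
        ring
    _ ≤ N * (N * (h ^ 4 * M)) * N ^ 2 := by gcongr
    _ = π ^ 4 * M := by
        simp only [h]
        field_simp

lemma tendsto_alternatingGridSum (hF : ContDiff ℝ 4 (uncurry F))
    (hper₁ : ∀ x, Periodic (F x) (2 * π)) (hper₂ : ∀ y, Periodic (F · y) (2 * π)) :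
    Tendsto (fun N : ℕ => alternatingGridSum F N (π / N)) atTop (nhds 0) := by
  have hcont : Continuous (uncurry (deriv₂ (deriv₂ (deriv₁ (deriv₁ F))))) :=
    (ContDiff.uncurry_deriv₂ (n := 0) (ContDiff.uncurry_deriv₂ (n := 1)
      (ContDiff.uncurry_deriv₁ (n := 2) (ContDiff.uncurry_deriv₁ (n := 3) hF)))).continuous
  obtain ⟨M, hM⟩ := (isCompact_Icc.prod isCompact_Icc).exists_bound_of_continuousOn
    (s := Icc 0 (2 * π) ×ˢ Icc 0 (2 * π)) hcont.continuousOn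
  refine squeeze_zero_norm' ?_ ((tendsto_const_nhds (x := π ^ 4 * M / 4)).div_atTop
    ((tendsto_pow_atTop two_ne_zero).comp tendsto_natCast_atTop_atTop))
  filter_upwards [eventually_gt_atTop 0] with N hN
  rw [div_div]
  exact abs_alternatingGridSum_le hF hper₁ hper₂ hN fun s hs t ht => hM (s, t) ⟨hs, ht⟩

end TwoVariables

lemma one_lt_cosh_mul_cosh_sub_sinh_mul_sinh_mul_cos {s t : ℝ} (hs : 0 < s) (hst : s < t)
    (θ : ℝ) : 1 < cosh s * cosh t - sinh s * sinh t * cos θ := by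
  have hsinh : 0 < sinh s * sinh t := mul_pos (sinh_pos_iff.2 hs) (sinh_pos_iff.2 (hs.trans hst))
  calc 1 < cosh (s - t) := one_lt_cosh.2 (sub_ne_zero.2 hst.ne)
    _ = cosh s * cosh t - sinh s * sinh t := cosh_sub s t
    _ ≤ cosh s * cosh t - sinh s * sinh t * cos θ := by nlinarith [cos_le_one θ]

lemma ContDiff.arcosh {f : ℝ → ℝ} {n : WithTop ℕ∞} (hf : ContDiff ℝ n f) (h : ∀ x, 1 < f x) :
    ContDiff ℝ n fun x => arcosh (f x) :=
  contDiff_iff_contDiffAt.2 fun x => (contDiffAt_arcosh (h x)).comp x hf.contDiffAt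

lemma contDiff_uncurry_log_sinh {γ : ℝ → ℝ} {n : WithTop ℕ∞} (hγ : ContDiff ℝ n γ)
    (hγ_pos : ∀ θ, 0 < γ θ) :
    ContDiff ℝ n (uncurry fun x y => log (sinh ((γ x + γ y) / 2))) :=
  ContDiff.log
    (contDiff_sinh.comp (((hγ.comp contDiff_fst).add (hγ.comp contDiff_snd)).div_const 2))
    fun p => (sinh_pos_iff.2 (by linarith [hγ_pos p.1, hγ_pos p.2])).ne'

lemma prod_prod_eq_exp_gridSum {G : ℝ → ℝ → ℝ} (hG : ∀ x y, 0 < G x y) (N : ℕ) (h c d : ℝ) :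
    ∏ j : Fin N, ∏ k : Fin N, G ((2 * j + c) * h) ((2 * k + d) * h) =
      exp (gridSum (fun x y => log (G x y)) N h c d) := by
  simp only [gridSum, exp_sum, exp_log (hG _ _)]
  rw [← Fin.prod_univ_eq_prod_range]
  exact prod_congr rfl fun j _ => Fin.prod_univ_eq_prod_range (fun k => G _ ((2 * k + d) * h)) N

lemma thetaP_eq (N : ℕ) (j : Fin N) : thetaP N j = (2 * j + 0) * (π / N) := by
  rw [thetaP, add_zero, mul_div_assoc]

lemma thetaA_eq (N : ℕ) (j : Fin N) : thetaA N j = (2 * j + 1) * (π / N) := by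
  rw [thetaA, mul_div_assoc]

lemma finiteSizeFactor_eq_exp {γ : ℝ → ℝ} (hγ_pos : ∀ θ, 0 < γ θ) (N : ℕ) :
    ((∏ j : Fin N, ∏ k : Fin N, sinh ((γ (thetaP N j) + γ (thetaA N k)) / 2) ^ 2) /
        ((∏ j : Fin N, ∏ k : Fin N, sinh ((γ (thetaP N j) + γ (thetaP N k)) / 2)) *
          ∏ j : Fin N, ∏ k : Fin N, sinh ((γ (thetaA N j) + γ (thetaA N k)) / 2))) ^ (4 : ℝ)⁻¹ =
      exp (-alternatingGridSum (fun x y => log (sinh ((γ x + γ y) / 2))) N (π / N) / 4) := by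
  have hpos : ∀ x y, 0 < sinh ((γ x + γ y) / 2) := fun x y =>
    sinh_pos_iff.2 (by linarith [hγ_pos x, hγ_pos y])
  simp only [thetaP_eq, thetaA_eq, Finset.prod_pow, prod_prod_eq_exp_gridSum hpos]
  rw [← exp_nat_mul, ← exp_add, ← exp_sub, ← exp_mul, alternatingGridSum,
    gridSum_comm (fun x y => by rw [add_comm]) N _ 1 0]
  congr 1
  push_cast
  ring

theorem xiT_tendsto_one_general
    (Ky Kxs : ℝ)
    (hKxs_pos : 0 < Kxs)
    (hferro : Kxs < Ky)
    (γ : ℝ → ℝ) (hγ_nonneg : ∀ θ, 0 ≤ γ θ)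
    (hγ : ∀ θ, Real.cosh (γ θ) =
      Real.cosh (2 * Kxs) * Real.cosh (2 * Ky) -
        Real.sinh (2 * Kxs) * Real.sinh (2 * Ky) * Real.cos θ)
    (ξT : ℕ → ℝ)
    (hξT : ∀ N : ℕ, 1 ≤ N → ξT N =
      ((∏ j : Fin N, ∏ k : Fin N,
          Real.sinh ((γ (thetaP N j) + γ (thetaA N k)) / 2) ^ 2) /
        ((∏ j : Fin N, ∏ k : Fin N,
            Real.sinh ((γ (thetaP N j) + γ (thetaP N k)) / 2)) *
          ∏ j : Fin N, ∏ k : Fin N,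
            Real.sinh ((γ (thetaA N j) + γ (thetaA N k)) / 2))) ^ ((4 : ℝ)⁻¹)) :
    Tendsto ξT atTop (nhds 1) := by
  have hz := one_lt_cosh_mul_cosh_sub_sinh_mul_sinh_mul_cos (by positivity : 0 < 2 * Kxs)
    (by linarith : 2 * Kxs < 2 * Ky)
  have hγ_eq : γ = fun θ =>
      arcosh (cosh (2 * Kxs) * cosh (2 * Ky) - sinh (2 * Kxs) * sinh (2 * Ky) * cos θ) :=
    funext fun θ => by rw [← hγ, arcosh_cosh (hγ_nonneg θ)]
  have hγ_pos : ∀ θ, 0 < γ θ := fun θ => hγ_eq ▸ arcosh_pos (hz θ)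
  have hγ_smooth : ContDiff ℝ 4 γ :=
    hγ_eq ▸ (contDiff_const.sub (contDiff_const.mul contDiff_cos)).arcosh hz
  have hγ_per : Periodic γ (2 * π) := fun θ => by simp only [hγ_eq, cos_add_two_pi]
  have hsum := tendsto_alternatingGridSum (contDiff_uncurry_log_sinh hγ_smooth hγ_pos)
    (fun x y => by simp only [hγ_per y]) (fun y x => by simp only [hγ_per x])
  have hexponent := hsum.neg.div_const 4
  rw [neg_zero, zero_div] at hexponent
  refine (tendsto_exp_nhds_zero_nhds_one.comp hexponent).congr' ?_
  filter_upwards [eventually_ge_atTop 1] with N hN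
  rw [hξT N hN, finiteSizeFactor_eq_exp hγ_pos]
  rfl

/-- Thermodynamic limit of the finite-size factor ξ_T(N): ξ_T(N) → 1 as N → ∞. -/
theorem xiT_tendsto_one
    (Kx Ky Kxs : ℝ)
    (hKx : 0 < Kx) (hKy : 0 < Ky)
    (hKxs_pos : 0 < Kxs) (hKxs : Real.tanh Kxs = Real.exp (-(2 * Kx)))
    (hferro : Kxs < Ky)
    (γ : ℝ → ℝ) (hγ_nonneg : ∀ θ, 0 ≤ γ θ)
    (hγ : ∀ θ, Real.cosh (γ θ) =
      Real.cosh (2 * Kxs) * Real.cosh (2 * Ky) -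
        Real.sinh (2 * Kxs) * Real.sinh (2 * Ky) * Real.cos θ)
    (ξT : ℕ → ℝ)
    (hξT : ∀ N : ℕ, 1 ≤ N → ξT N =
      ((∏ j : Fin N, ∏ k : Fin N,
          Real.sinh ((γ (thetaP N j) + γ (thetaA N k)) / 2) ^ 2) /
        ((∏ j : Fin N, ∏ k : Fin N,
            Real.sinh ((γ (thetaP N j) + γ (thetaP N k)) / 2)) *
          ∏ j : Fin N, ∏ k : Fin N,
            Real.sinh ((γ (thetaA N j) + γ (thetaA N k)) / 2))) ^ ((4 : ℝ)⁻¹)) :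
    Tendsto ξT atTop (nhds 1) :=
  xiT_tendsto_one_general Ky Kxs hKxs_pos hferro γ hγ_nonneg hγ ξT hξT
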